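/- (Theorem 1: ELBO converges to a sum of entropies.) Consider data x¹,…,x^N ∈ ℝ^D, a matrix W̃ ∈ ℝ^{D×H}, scales λ ∈ (0,∞)^H, a variance σ² > 0, and probability densities q₁,…,q_N on ℝ^H such that for each n: the differential entropy H[q_n] = −∫ q_n log q_n is finite, ∫ |z_h| q_n(z) dz is finite for every h, and ∫ ‖x^{(n)} − W̃z‖² q_n(z) dz is finite. Define the ELBO by ℒ(λ,σ²) = (1/N)·Σ_n ∫ q_n(z)·[ log p_{σ²}(x^{(n)}|z) + log p_λ(z) − log q_n(z) ] dz. If all partial derivatives of ℒ with respect to λ₁,…,λ_H and with respect to σ² vanish at (λ,σ²), then ℒ(λ,σ²) = (1/N)·Σ_{n=1}^N H[q_n] − Σ_{h=1}^H log(2·e·λ_h) − (D/2)·log(2πe·σ²). -/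

import Mathlib

open MeasureTheory Real

/-- Factorized Laplace prior density with scales `lam`:
`p_lam(z) = prod_h (1/(2*lam_h)) * exp(-|z_h|/lam_h)`. -/
noncomputable def laplacePdf {H : ℕ} (lam : Fin H → ℝ) (z : Fin H → ℝ) : ℝ :=
  ∏ h, (1 / (2 * lam h)) * Real.exp (-|z h| / lam h)

/-- Gaussian observation density on the `D`-dimensional observables:
`p_s(x|z) = (2*pi*s)^(-D/2) * exp(-||x - W z||^2 / (2*s))` with `s = sigma^2`. -/
noncomputable def gaussObsPdf {D H : ℕ} (W : Matrix (Fin D) (Fin H) ℝ) (s : ℝ)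
    (x : Fin D → ℝ) (z : Fin H → ℝ) : ℝ :=
  (2 * Real.pi * s) ^ (-(D : ℝ) / 2) *
    Real.exp (-(∑ i, (x i - W.mulVec z i) ^ 2) / (2 * s))

/-- **Theorem 1 (ELBO converges to a sum of entropies).**
If all partial derivatives of the ELBO with respect to the Laplace scales
`lam_1, ..., lam_H` and with respect to `sigma^2` vanish at `(lam, sigma^2)`, then the
ELBO equals the sum of entropies
`(1/N)*sum_n H[q_n] - sum_h log(2*e*lam_h) - (D/2)*log(2*pi*e*sigma^2)`. -/
theorem elbo_eq_entropy_sum_at_stationary_points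
    (N D H : ℕ) (hN : 0 < N)
    (x : Fin N → Fin D → ℝ) (W : Matrix (Fin D) (Fin H) ℝ)
    (lam : Fin H → ℝ) (hlam : ∀ h, 0 < lam h) (σ2 : ℝ) (hσ2 : 0 < σ2)
    (q : Fin N → (Fin H → ℝ) → ℝ)
    (hq_nonneg : ∀ n z, 0 ≤ q n z)
    (hq_int : ∀ n, Integrable (q n))
    (hq_prob : ∀ n, ∫ z : Fin H → ℝ, q n z = 1)
    (hq_ent : ∀ n, Integrable (fun z : Fin H → ℝ => q n z * Real.log (q n z)))
    (hq_abs : ∀ n h, Integrable (fun z : Fin H → ℝ => q n z * |z h|))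
    (hq_rec : ∀ n,
      Integrable (fun z : Fin H → ℝ => q n z * ∑ i, (x n i - W.mulVec z i) ^ 2))
    (ELBO : (Fin H → ℝ) → ℝ → ℝ)
    (hELBO : ∀ l s, ELBO l s = (1 / N : ℝ) * ∑ n, ∫ z : Fin H → ℝ,
      q n z * (Real.log (gaussObsPdf W s (x n) z) + Real.log (laplacePdf l z) -
        Real.log (q n z)))
    (hstat_lam : ∀ h, deriv (fun t : ℝ => ELBO (Function.update lam h t) σ2) (lam h) = 0)
    (hstat_s : deriv (fun s : ℝ => ELBO lam s) σ2 = 0) :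
    ELBO lam σ2 =
      (1 / N : ℝ) * ∑ n, (-∫ z : Fin H → ℝ, q n z * Real.log (q n z)) -
        ∑ h, Real.log (2 * Real.exp 1 * lam h) -
        ((D : ℝ) / 2) * Real.log (2 * Real.pi * Real.exp 1 * σ2) := by
  have hNne : (N : ℝ) ≠ 0 := Nat.cast_ne_zero.mpr hN.ne'
  obtain ⟨A, hA⟩ : ∃ A : Fin N → ℝ, ∀ n,
      A n = ∫ z : Fin H → ℝ, q n z * ∑ i, (x n i - W.mulVec z i) ^ 2 := ⟨_, fun n => rfl⟩
  obtain ⟨B, hB⟩ : ∃ B : Fin N → Fin H → ℝ, ∀ n h,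
      B n h = ∫ z : Fin H → ℝ, q n z * |z h| := ⟨_, fun n h => rfl⟩
  obtain ⟨E, hEq⟩ : ∃ E : Fin N → ℝ, ∀ n,
      E n = ∫ z : Fin H → ℝ, q n z * Real.log (q n z) := ⟨_, fun n => rfl⟩
  -- Key expansion of the ELBO for positive parameters
  have key : ∀ (l : Fin H → ℝ) (s : ℝ), (∀ h, 0 < l h) → 0 < s →
      ELBO l s = (1 / N : ℝ) * ∑ n,
        ((-(D : ℝ)/2) * Real.log (2 * Real.pi * s)
          - (2*s)⁻¹ * A n
          - (∑ h, (Real.log (2 * l h) + (l h)⁻¹ * B n h))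
          - E n) := by
    intro l s hl hs
    have hs2π : (0:ℝ) < 2 * Real.pi * s := by positivity
    rw [hELBO]
    congr 1
    apply Finset.sum_congr rfl
    intro n _
    have hgauss : ∀ z : Fin H → ℝ, Real.log (gaussObsPdf W s (x n) z)
        = (-(D : ℝ)/2) * Real.log (2 * Real.pi * s)
          + (-(∑ i, (x n i - W.mulVec z i) ^ 2) / (2 * s)) := by
      intro z
      unfold gaussObsPdf
      rw [Real.log_mul (ne_of_gt (Real.rpow_pos_of_pos hs2π _)) (Real.exp_ne_zero _),
        Real.log_rpow hs2π, Real.log_exp]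
    have hlap : ∀ z : Fin H → ℝ, Real.log (laplacePdf l z)
        = ∑ h, (-(Real.log (2 * l h)) + (-|z h| / l h)) := by
      intro z
      unfold laplacePdf
      rw [Real.log_prod]
      · apply Finset.sum_congr rfl
        intro h _
        have hlh := hl h
        rw [Real.log_mul (by positivity) (Real.exp_ne_zero _), Real.log_exp, one_div,
          Real.log_inv]
      · intro h _
        have hlh := hl h
        positivity
    have hpt : ∀ z : Fin H → ℝ,
        q n z * (Real.log (gaussObsPdf W s (x n) z) + Real.log (laplacePdf l z)
          - Real.log (q n z))
        = ((-(D : ℝ)/2) * Real.log (2 * Real.pi * s)) * q n z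
          - (2*s)⁻¹ * (q n z * ∑ i, (x n i - W.mulVec z i) ^ 2)
          - (∑ h, (Real.log (2 * l h) * q n z + (l h)⁻¹ * (q n z * |z h|)))
          - q n z * Real.log (q n z) := by
      intro z
      rw [hgauss z, hlap z]
      have h1 : q n z * ∑ h, (-(Real.log (2 * l h)) + (-|z h| / l h))
          = -∑ h, (Real.log (2 * l h) * q n z + (l h)⁻¹ * (q n z * |z h|)) := by
        rw [Finset.mul_sum, ← Finset.sum_neg_distrib]
        apply Finset.sum_congr rfl
        intro h _
        have hlh : l h ≠ 0 := (hl h).ne'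
        field_simp
        ring
      rw [mul_sub, mul_add, h1]
      ring
    simp only [hpt]
    have hI1 : Integrable (fun z : Fin H → ℝ =>
        ((-(D : ℝ)/2) * Real.log (2 * Real.pi * s)) * q n z) := (hq_int n).const_mul _
    have hI2 : Integrable (fun z : Fin H → ℝ =>
        (2*s)⁻¹ * (q n z * ∑ i, (x n i - W.mulVec z i) ^ 2)) := (hq_rec n).const_mul _
    have hI3 : Integrable (fun z : Fin H → ℝ =>
        ∑ h, (Real.log (2 * l h) * q n z + (l h)⁻¹ * (q n z * |z h|))) :=
      integrable_finset_sum _ (fun h _ =>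
        ((hq_int n).const_mul _).add ((hq_abs n h).const_mul _))
    have hI12 : Integrable (fun z : Fin H → ℝ =>
        ((-(D : ℝ)/2) * Real.log (2 * Real.pi * s)) * q n z
          - (2*s)⁻¹ * (q n z * ∑ i, (x n i - W.mulVec z i) ^ 2)) := hI1.sub hI2
    have hI123 : Integrable (fun z : Fin H → ℝ =>
        ((-(D : ℝ)/2) * Real.log (2 * Real.pi * s)) * q n z
          - (2*s)⁻¹ * (q n z * ∑ i, (x n i - W.mulVec z i) ^ 2)
          - (∑ h, (Real.log (2 * l h) * q n z + (l h)⁻¹ * (q n z * |z h|)))) :=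
      hI12.sub hI3
    have hIh : ∀ h : Fin H, Integrable (fun z : Fin H → ℝ =>
        Real.log (2 * l h) * q n z + (l h)⁻¹ * (q n z * |z h|)) :=
      fun h => ((hq_int n).const_mul _).add ((hq_abs n h).const_mul _)
    rw [integral_sub hI123 (hq_ent n),
      integral_sub hI12 hI3, integral_sub hI1 hI2,
      integral_const_mul, integral_const_mul,
      integral_finset_sum _ (fun h _ => hIh h),
      hq_prob n, ← hA n, ← hEq n]
    rw [Finset.sum_congr rfl (fun h _ => by
      rw [integral_add ((hq_int n).const_mul _) ((hq_abs n h).const_mul _),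
        integral_const_mul, integral_const_mul, hq_prob n, ← hB n, mul_one])]
    ring
  -- Stationarity in each lam h gives  ∑ n, B n h = lam h * N
  have hBsum : ∀ h, ∑ n, B n h = lam h * N := by
    intro h
    have h0 : lam h ≠ 0 := (hlam h).ne'
    have hev : (fun t : ℝ => ELBO (Function.update lam h t) σ2) =ᶠ[nhds (lam h)]
        (fun t : ℝ => (1 / N : ℝ) * ∑ n,
          ((-(D : ℝ)/2) * Real.log (2 * Real.pi * σ2)
            - (2*σ2)⁻¹ * A n
            - ((Real.log (2 * t) + t⁻¹ * B n h)
               + ∑ h' ∈ Finset.univ.erase h, (Real.log (2 * lam h') + (lam h')⁻¹ * B n h'))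
            - E n)) := by
      filter_upwards [eventually_gt_nhds (hlam h)] with t ht
      have hl' : ∀ h', 0 < Function.update lam h t h' := by
        intro h'
        rcases eq_or_ne h' h with rfl | hne
        · simpa using ht
        · rw [Function.update_of_ne hne]; exact hlam h'
      rw [key _ _ hl' hσ2]
      congr 1
      apply Finset.sum_congr rfl
      intro n _
      congr 2
      rw [← Finset.add_sum_erase _ _ (Finset.mem_univ h)]
      congr 1
      · rw [Function.update_self]
      · apply Finset.sum_congr rfl
        intro h' hh'
        rw [Function.update_of_ne (Finset.ne_of_mem_erase hh')]
    have hlog' : HasDerivAt (fun t : ℝ => Real.log (2 * t)) ((lam h)⁻¹) (lam h) := by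
      have := ((hasDerivAt_id (lam h)).const_mul 2).log (by positivity :
        (2 : ℝ) * lam h ≠ 0)
      convert this using 1
      · rfl
      · rw [id_eq]
        field_simp
    have hder : ∀ n : Fin N, HasDerivAt (fun t : ℝ =>
        (-(D : ℝ)/2) * Real.log (2 * Real.pi * σ2)
          - (2*σ2)⁻¹ * A n
          - ((Real.log (2 * t) + t⁻¹ * B n h)
             + ∑ h' ∈ Finset.univ.erase h, (Real.log (2 * lam h') + (lam h')⁻¹ * B n h'))
          - E n)
        (-((lam h)⁻¹ + -((lam h)^2)⁻¹ * B n h)) (lam h) := by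
      intro n
      exact ((((hlog'.add ((hasDerivAt_inv h0).mul_const (B n h))).add_const
        _).const_sub _).sub_const _)
    have hΨ : HasDerivAt (fun t : ℝ => (1 / N : ℝ) * ∑ n,
        ((-(D : ℝ)/2) * Real.log (2 * Real.pi * σ2)
          - (2*σ2)⁻¹ * A n
          - ((Real.log (2 * t) + t⁻¹ * B n h)
             + ∑ h' ∈ Finset.univ.erase h, (Real.log (2 * lam h') + (lam h')⁻¹ * B n h'))
          - E n))
        ((1 / N : ℝ) * ∑ n, (-((lam h)⁻¹ + -((lam h)^2)⁻¹ * B n h))) (lam h) :=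
      (HasDerivAt.fun_sum (fun n _ => hder n)).const_mul _
    have hzero : (1 / N : ℝ) * ∑ n, (-((lam h)⁻¹ + -((lam h)^2)⁻¹ * B n h)) = 0 := by
      rw [← hΨ.deriv, ← hev.deriv_eq]
      exact hstat_lam h
    rw [Finset.sum_neg_distrib, Finset.sum_add_distrib, Finset.sum_const,
      Finset.card_univ, Fintype.card_fin, nsmul_eq_mul, ← Finset.mul_sum] at hzero
    field_simp at hzero
    have h3 : (∑ n, B n h) * lam h = (lam h * (N:ℝ)) * lam h := by
      ring_nf
      ring_nf at hzero
      linear_combination (lam h) * hzero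
    exact mul_right_cancel₀ h0 h3
  -- Stationarity in σ2 gives  ∑ n, A n = D * σ2 * N
  have hAsum : ∑ n, A n = (D : ℝ) * σ2 * N := by
    have hπ : Real.pi ≠ 0 := Real.pi_ne_zero
    have hs0 : σ2 ≠ 0 := hσ2.ne'
    have hev : (fun s : ℝ => ELBO lam s) =ᶠ[nhds σ2]
        (fun s : ℝ => (1 / N : ℝ) * ∑ n,
          ((-(D : ℝ)/2) * Real.log (2 * Real.pi * s)
            - (2*s)⁻¹ * A n
            - (∑ h, (Real.log (2 * lam h) + (lam h)⁻¹ * B n h))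
            - E n)) := by
      filter_upwards [eventually_gt_nhds hσ2] with s hs
      exact key lam s hlam hs
    have hlogs : HasDerivAt (fun s : ℝ => Real.log (2 * Real.pi * s)) (σ2⁻¹) σ2 := by
      have := ((hasDerivAt_id σ2).const_mul (2 * Real.pi)).log (by positivity :
        2 * Real.pi * σ2 ≠ 0)
      convert this using 1
      · rfl
      · rw [id_eq]
        field_simp
    have hinvs : HasDerivAt (fun s : ℝ => (2*s)⁻¹) (-(2*1) / (2*σ2)^2) σ2 :=
      ((hasDerivAt_id σ2).const_mul 2).inv (by positivity)
    have hder : ∀ n : Fin N, HasDerivAt (fun s : ℝ =>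
        (-(D : ℝ)/2) * Real.log (2 * Real.pi * s)
          - (2*s)⁻¹ * A n
          - (∑ h, (Real.log (2 * lam h) + (lam h)⁻¹ * B n h))
          - E n)
        ((-(D : ℝ)/2) * σ2⁻¹ - (-(2*1) / (2*σ2)^2) * A n) σ2 := by
      intro n
      exact (((hlogs.const_mul _).sub (hinvs.mul_const _)).sub_const _).sub_const _
    have hΦ : HasDerivAt (fun s : ℝ => (1 / N : ℝ) * ∑ n,
        ((-(D : ℝ)/2) * Real.log (2 * Real.pi * s)
          - (2*s)⁻¹ * A n
          - (∑ h, (Real.log (2 * lam h) + (lam h)⁻¹ * B n h))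
          - E n))
        ((1 / N : ℝ) * ∑ n, ((-(D : ℝ)/2) * σ2⁻¹ - (-(2*1) / (2*σ2)^2) * A n)) σ2 :=
      (HasDerivAt.fun_sum (fun n _ => hder n)).const_mul _
    have hzero : (1 / N : ℝ) * ∑ n, ((-(D : ℝ)/2) * σ2⁻¹ - (-(2*1) / (2*σ2)^2) * A n) = 0 := by
      rw [← hΦ.deriv, ← hev.deriv_eq]
      exact hstat_s
    rw [Finset.sum_sub_distrib, Finset.sum_const, Finset.card_univ, Fintype.card_fin,
      nsmul_eq_mul, ← Finset.mul_sum] at hzero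
    field_simp at hzero
    have h3 : (∑ n, A n) * (4*σ2) = ((D:ℝ)*σ2*(N:ℝ)) * (4*σ2) := by
      ring_nf
      ring_nf at hzero
      linear_combination (4 * σ2) * hzero
    exact mul_right_cancel₀ (by positivity) h3
  -- Final assembly
  rw [key lam σ2 hlam hσ2]
  have hsum : ∑ n, ((-(D : ℝ)/2) * Real.log (2 * Real.pi * σ2)
      - (2*σ2)⁻¹ * A n
      - (∑ h, (Real.log (2 * lam h) + (lam h)⁻¹ * B n h))
      - E n)
      = (N : ℝ) * ((-(D : ℝ)/2) * Real.log (2 * Real.pi * σ2))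
        - (N : ℝ) * ((D : ℝ)/2)
        - (N : ℝ) * (∑ h, (Real.log (2 * lam h) + 1))
        - ∑ n, E n := by
    rw [Finset.sum_sub_distrib, Finset.sum_sub_distrib, Finset.sum_sub_distrib]
    congr 2
    congr 2
    · rw [Finset.sum_const, Finset.card_univ, Fintype.card_fin, nsmul_eq_mul]
    · rw [← Finset.mul_sum, hAsum]
      field_simp
    · rw [Finset.sum_comm, Finset.mul_sum]
      apply Finset.sum_congr rfl
      intro h _
      rw [Finset.sum_add_distrib, Finset.sum_const, Finset.card_univ, Fintype.card_fin,
        nsmul_eq_mul, ← Finset.mul_sum, hBsum h]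
      have h0 : lam h ≠ 0 := (hlam h).ne'
      field_simp
  rw [hsum]
  have hlog1 : ∀ h : Fin H, Real.log (2 * Real.exp 1 * lam h)
      = Real.log (2 * lam h) + 1 := by
    intro h
    rw [show (2 : ℝ) * Real.exp 1 * lam h = (2 * lam h) * Real.exp 1 by ring,
      Real.log_mul (by have := hlam h; positivity) (Real.exp_ne_zero _), Real.log_exp]
  have hlog2 : Real.log (2 * Real.pi * Real.exp 1 * σ2)
      = Real.log (2 * Real.pi * σ2) + 1 := by
    rw [show (2 : ℝ) * Real.pi * Real.exp 1 * σ2 = (2 * Real.pi * σ2) * Real.exp 1 by ring,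
      Real.log_mul (by positivity) (Real.exp_ne_zero _), Real.log_exp]
  simp only [hlog1, hlog2]
  simp only [← hEq, Finset.sum_neg_distrib]
  field_simp
  ring
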